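/- (Strata-fixed-effects regression, general decomposition.) Assume positivity. Then the SFE-regression slope satisfies Δ_sfe = Δ_dce^f + Δ_sel^f, where Δ_dce^f = Σ_{a∈𝒜} ω_sfe(a)·E[Y(1,a) − Y(0,a) | D=1, A=a] and Δ_sel^f = Σ_{a∈𝒜} ω_sfe(a)·(E[Y(0,a) | D=1, A=a] − E[Y(0,a) | D=0, A=a]); moreover Σ_{a∈𝒜} ω_sfe(a) = 1 and ω_sfe(a) ≥ 0 for all a∈𝒜. -/

import Mathlib

open MeasureTheory ProbabilityTheory BigOperators

noncomputable section

variable {Ω : Type} [MeasurableSpace Ω] {K : ℕ}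

/-- Expectation of a real-valued random variable. -/
def Exp (P : Measure Ω) (Z : Ω → ℝ) : ℝ := ∫ ω, Z ω ∂P

/-- Probability of an event, as a real number. -/
def Pr (P : Measure Ω) (s : Set Ω) : ℝ := (P s).toReal

/-- Conditional expectation given an event, defined as a ratio. -/
def CE (P : Measure Ω) (Z : Ω → ℝ) (s : Set Ω) : ℝ :=
  Exp P (fun ω => Z ω * s.indicator (fun _ => (1:ℝ)) ω) / Pr P s

/-- Covariance of two real-valued random variables. -/
def Cov (P : Measure Ω) (Z W : Ω → ℝ) : ℝ :=
  Exp P (fun ω => Z ω * W ω) - Exp P Z * Exp P W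

/-- The event {D = d, A = a}. -/
def evDA (D : Ω → ℕ) (A : Ω → Fin K → ℕ) (d : ℕ) (a : Fin K → ℕ) : Set Ω :=
  {ω | D ω = d ∧ A ω = a}

/-- The event {D = d}. -/
def evD (D : Ω → ℕ) (d : ℕ) : Set Ω := {ω | D ω = d}

/-- The event {A = a}. -/
def evA (A : Ω → Fin K → ℕ) (a : Fin K → ℕ) : Set Ω := {ω | A ω = a}

/-- π_d(a) = P(A = a | D = d). -/
def piP (P : Measure Ω) (D : Ω → ℕ) (A : Ω → Fin K → ℕ) (d : ℕ) (a : Fin K → ℕ) : ℝ :=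
  Pr P (evDA D A d a) / Pr P (evD D d)

/-- The observed outcome Y = Σ_{(d,a)} Y(d,a)·1{D=d, A=a}. -/
def Yobs (D : Ω → ℕ) (A : Ω → Fin K → ℕ) (𝒜 : Finset (Fin K → ℕ))
    (Ypot : ℕ → (Fin K → ℕ) → Ω → ℝ) : Ω → ℝ :=
  fun ω => ∑ d ∈ ({0, 1} : Finset ℕ), ∑ a ∈ 𝒜,
    Ypot d a ω * (if D ω = d ∧ A ω = a then (1:ℝ) else 0)

/-- μ(d,a) = E[Y(d,a)]. -/
def muP (P : Measure Ω) (Ypot : ℕ → (Fin K → ℕ) → Ω → ℝ) (d : ℕ) (a : Fin K → ℕ) : ℝ :=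
  Exp P (Ypot d a)

/-- The random vector (D, A) as a real-valued family indexed by Unit ⊕ Fin K. -/
def DAvec (D : Ω → ℕ) (A : Ω → Fin K → ℕ) : Unit ⊕ Fin K → Ω → ℝ :=
  Sum.elim (fun _ ω => (D ω : ℝ)) (fun j ω => (A ω j : ℝ))

/-- The (K+1)×(K+1) covariance matrix of (D, A). -/
def covDAmat (P : Measure Ω) (D : Ω → ℕ) (A : Ω → Fin K → ℕ) :
    Matrix (Unit ⊕ Fin K) (Unit ⊕ Fin K) ℝ :=
  Matrix.of fun i j => Cov P (DAvec D A i) (DAvec D A j)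

/-- The K×K covariance matrix Var(A). -/
def varAmat (P : Measure Ω) (A : Ω → Fin K → ℕ) : Matrix (Fin K) (Fin K) ℝ :=
  Matrix.of fun i j => Cov P (fun ω => (A ω i : ℝ)) (fun ω => (A ω j : ℝ))

/-- The row vector Cov(D, A). -/
def covDA (P : Measure Ω) (D : Ω → ℕ) (A : Ω → Fin K → ℕ) : Fin K → ℝ :=
  fun j => Cov P (fun ω => (D ω : ℝ)) (fun ω => (A ω j : ℝ))

/-- M = Cov(D,A) ⬝ Var(A)⁻¹. -/
def Mlong (P : Measure Ω) (D : Ω → ℕ) (A : Ω → Fin K → ℕ) : Fin K → ℝ :=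
  fun j => ∑ i, covDA P D A i * (varAmat P A)⁻¹ i j

/-- Var(D). -/
def varD (P : Measure Ω) (D : Ω → ℕ) : ℝ :=
  Cov P (fun ω => (D ω : ℝ)) (fun ω => (D ω : ℝ))

/-- denom = Var(D) − Cov(D,A)·Var(A)⁻¹·Cov(A,D). -/
def denomL (P : Measure Ω) (D : Ω → ℕ) (A : Ω → Fin K → ℕ) : ℝ :=
  varD P D - ∑ j, Mlong P D A j * covDA P D A j

/-- The long-regression weight ω_dce^l(a). -/
def wdceL (P : Measure Ω) (D : Ω → ℕ) (A : Ω → Fin K → ℕ) (a : Fin K → ℕ) : ℝ :=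
  piP P D A 1 a *
    (varD P D - Pr P (evD D 1) *
      ∑ j, Mlong P D A j * ((a j : ℝ) - Exp P (fun ω => (A ω j : ℝ)))) / denomL P D A

/-- The long-regression weight ω_ind^l(a). -/
def windL (P : Measure Ω) (D : Ω → ℕ) (A : Ω → Fin K → ℕ) (a : Fin K → ℕ) : ℝ :=
  (varD P D * (piP P D A 1 a - piP P D A 0 a) -
    Pr P (evA A a) * ∑ j, Mlong P D A j * ((a j : ℝ) - Exp P (fun ω => (A ω j : ℝ))))
  / denomL P D A

/-- The residual of the long regression of Y on (1, D, A). -/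
def residLong (D : Ω → ℕ) (A : Ω → Fin K → ℕ) (𝒜 : Finset (Fin K → ℕ))
    (Ypot : ℕ → (Fin K → ℕ) → Ω → ℝ) (Δ θ₀ : ℝ) (θ : Fin K → ℝ) : Ω → ℝ :=
  fun ω => Yobs D A 𝒜 Ypot ω - Δ * (D ω : ℝ) - θ₀ - ∑ j, θ j * (A ω j : ℝ)

/-- The random vector W = (A, A·D) as a real-valued family indexed by Fin K ⊕ Fin K. -/
def Wvec (D : Ω → ℕ) (A : Ω → Fin K → ℕ) : Fin K ⊕ Fin K → Ω → ℝ :=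
  Sum.elim (fun j ω => (A ω j : ℝ)) (fun j ω => (A ω j : ℝ) * (D ω : ℝ))

/-- The 2K×2K covariance matrix Var(W), W = (A, AD). -/
def varWmat (P : Measure Ω) (D : Ω → ℕ) (A : Ω → Fin K → ℕ) :
    Matrix (Fin K ⊕ Fin K) (Fin K ⊕ Fin K) ℝ :=
  Matrix.of fun u v => Cov P (Wvec D A u) (Wvec D A v)

/-- The row vector Cov(D, W). -/
def covDW (P : Measure Ω) (D : Ω → ℕ) (A : Ω → Fin K → ℕ) : Fin K ⊕ Fin K → ℝ :=
  fun u => Cov P (fun ω => (D ω : ℝ)) (Wvec D A u)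

/-- M = Cov(D,W) ⬝ Var(W)⁻¹ for the interaction regression. -/
def Minter (P : Measure Ω) (D : Ω → ℕ) (A : Ω → Fin K → ℕ) : Fin K ⊕ Fin K → ℝ :=
  fun v => ∑ u, covDW P D A u * (varWmat P D A)⁻¹ u v

/-- denom = Var(D) − M·Cov(W,D) for the interaction regression. -/
def denomI (P : Measure Ω) (D : Ω → ℕ) (A : Ω → Fin K → ℕ) : ℝ :=
  varD P D - ∑ v, Minter P D A v * covDW P D A v

/-- E[A_j | D = 1]. -/
def condA1 (P : Measure Ω) (D : Ω → ℕ) (A : Ω → Fin K → ℕ) (j : Fin K) : ℝ :=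
  CE P (fun ω => (A ω j : ℝ)) (evD D 1)

/-- The random vector (D, A, AD) as a real-valued family. -/
def DADvec (D : Ω → ℕ) (A : Ω → Fin K → ℕ) : Unit ⊕ (Fin K ⊕ Fin K) → Ω → ℝ :=
  Sum.elim (fun _ ω => (D ω : ℝ)) (Wvec D A)

/-- The (2K+1)×(2K+1) covariance matrix of (D, A, AD). -/
def covDADmat (P : Measure Ω) (D : Ω → ℕ) (A : Ω → Fin K → ℕ) :
    Matrix (Unit ⊕ (Fin K ⊕ Fin K)) (Unit ⊕ (Fin K ⊕ Fin K)) ℝ :=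
  Matrix.of fun i j => Cov P (DADvec D A i) (DADvec D A j)

/-- The interaction-regression weight ω_dce^i(a). -/
def wdceI (P : Measure Ω) (D : Ω → ℕ) (A : Ω → Fin K → ℕ) (a : Fin K → ℕ) : ℝ :=
  piP P D A 1 a *
    (varD P D
      - Pr P (evD D 1) *
          ∑ j, Minter P D A (Sum.inl j) * ((a j : ℝ) - Exp P (fun ω => (A ω j : ℝ)))
      - Pr P (evD D 1) *
          ∑ j, Minter P D A (Sum.inr j) * ((a j : ℝ) - Pr P (evD D 1) * condA1 P D A j))
  / denomI P D A

/-- The interaction-regression weight ω_ind^i(a). -/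
def windI (P : Measure Ω) (D : Ω → ℕ) (A : Ω → Fin K → ℕ) (a : Fin K → ℕ) : ℝ :=
  (varD P D * (piP P D A 1 a - piP P D A 0 a)
    - ∑ j, Minter P D A (Sum.inl j) * Pr P (evA A a) * ((a j : ℝ) - Exp P (fun ω => (A ω j : ℝ)))
    - Pr P (evD D 1) *
        ∑ j, Minter P D A (Sum.inr j) *
          (piP P D A 1 a * (a j : ℝ) - Pr P (evA A a) * condA1 P D A j))
  / denomI P D A

/-- The residual of the interaction regression of Y on (1, D, A, AD). -/
def residInter (D : Ω → ℕ) (A : Ω → Fin K → ℕ) (𝒜 : Finset (Fin K → ℕ))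
    (Ypot : ℕ → (Fin K → ℕ) → Ω → ℝ) (Δ θ₀ : ℝ) (θ lam : Fin K → ℝ) : Ω → ℝ :=
  fun ω => Yobs D A 𝒜 Ypot ω - Δ * (D ω : ℝ) - θ₀ - (∑ j, θ j * (A ω j : ℝ))
    - ∑ j, lam j * (A ω j : ℝ) * (D ω : ℝ)

/-- P(D = d | A = a). -/
def condDgivenA (P : Measure Ω) (D : Ω → ℕ) (A : Ω → Fin K → ℕ) (d : ℕ) (a : Fin K → ℕ) : ℝ :=
  Pr P (evDA D A d a) / Pr P (evA A a)

/-- The SFE weight ω_sfe(a). -/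
def wsfe (P : Measure Ω) (D : Ω → ℕ) (A : Ω → Fin K → ℕ) (𝒜 : Finset (Fin K → ℕ))
    (a : Fin K → ℕ) : ℝ :=
  condDgivenA P D A 1 a * condDgivenA P D A 0 a * Pr P (evA A a) /
    ∑ a' ∈ 𝒜, condDgivenA P D A 1 a' * condDgivenA P D A 0 a' * Pr P (evA A a')

/-- The residual of the SFE regression of Y on (D, {1{A=a}}). -/
def residSFE (D : Ω → ℕ) (A : Ω → Fin K → ℕ) (𝒜 : Finset (Fin K → ℕ))
    (Ypot : ℕ → (Fin K → ℕ) → Ω → ℝ) (Δ : ℝ) (θ : (Fin K → ℕ) → ℝ) : Ω → ℝ :=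
  fun ω => Yobs D A 𝒜 Ypot ω - Δ * (D ω : ℝ) -
    ∑ a ∈ 𝒜, θ a * (if A ω = a then (1:ℝ) else 0)

/-- The residual of the saturated regression of Y on ({1{A=a}}, {D·1{A=a}}). -/
def residSAT (D : Ω → ℕ) (A : Ω → Fin K → ℕ) (𝒜 : Finset (Fin K → ℕ))
    (Ypot : ℕ → (Fin K → ℕ) → Ω → ℝ) (γ Δsat : (Fin K → ℕ) → ℝ) : Ω → ℝ :=
  fun ω => Yobs D A 𝒜 Ypot ω - (∑ a ∈ 𝒜, γ a * (if A ω = a then (1:ℝ) else 0)) -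
    ∑ a ∈ 𝒜, Δsat a * (D ω : ℝ) * (if A ω = a then (1:ℝ) else 0)

/-! Write `p_d(a) = P(D = d, A = a)` and `m_d(a) = E[Y(d,a) | D = d, A = a]`. The normal
equation for the stratum dummy `1{A = a}` makes the fixed effect `θ a` the `p`-weighted mean of
`m₀(a)` and `m₁(a) - Δ`; substituted into the normal equation for `D`, stratum `a` contributes
`h(a) (m₁(a) - m₀(a) - Δ)` with `h(a) = p₀(a) p₁(a) / (p₀(a) + p₁(a)) = P(A = a) Var(D | A = a)`.
Hence `Δ` is the `h`-weighted mean of the contrasts `m₁(a) - m₀(a)`, and each contrast splits, by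
adding and subtracting `E[Y(0,a) | D = 1, A = a]`, into the effect on the treated and a selection
term. -/

section ConditionalMean

variable {Ω : Type} [MeasurableSpace Ω] {P : Measure Ω} {Z W : Ω → ℝ} {s : Set Ω}

theorem integrable_mul_indicator_one (hZ : Integrable Z P) (hs : MeasurableSet s) :
    Integrable (fun ω => Z ω * s.indicator (fun _ => (1 : ℝ)) ω) P := by
  have h : (fun ω => Z ω * s.indicator (fun _ => (1 : ℝ)) ω) = s.indicator Z := by
    funext ω
    by_cases hω : ω ∈ s <;> simp [hω]
  exact h ▸ hZ.indicator hs

theorem integrable_sub_const_mul_indicator_one [IsFiniteMeasure P] (hZ : Integrable Z P)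
    (hs : MeasurableSet s) (c : ℝ) :
    Integrable (fun ω => (Z ω - c) * s.indicator (fun _ => (1 : ℝ)) ω) P :=
  integrable_mul_indicator_one (hZ.sub (integrable_const c)) hs

theorem exp_mul_indicator_one (hPs : Pr P s ≠ 0) :
    Exp P (fun ω => Z ω * s.indicator (fun _ => (1 : ℝ)) ω) = CE P Z s * Pr P s :=
  (div_mul_cancel₀ _ hPs).symm

theorem exp_sub_const_mul_indicator_one [IsFiniteMeasure P] (hZ : Integrable Z P)
    (hs : MeasurableSet s) (hPs : Pr P s ≠ 0) (c : ℝ) :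
    Exp P (fun ω => (Z ω - c) * s.indicator (fun _ => (1 : ℝ)) ω) = (CE P Z s - c) * Pr P s := by
  have hone : Integrable (s.indicator fun _ => (1 : ℝ)) P := (integrable_const 1).indicator hs
  calc Exp P (fun ω => (Z ω - c) * s.indicator (fun _ => (1 : ℝ)) ω)
      = Exp P (fun ω => Z ω * s.indicator (fun _ => (1 : ℝ)) ω)
          - c * ∫ ω, s.indicator (fun _ => (1 : ℝ)) ω ∂P := by
        simp only [Exp, sub_mul]
        rw [integral_sub (integrable_mul_indicator_one hZ hs) (hone.const_mul c),
          integral_const_mul]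
    _ = (CE P Z s - c) * Pr P s := by
        rw [exp_mul_indicator_one hPs, integral_indicator_const _ hs, smul_eq_mul, mul_one]
        simp only [Pr, Measure.real]
        ring

theorem CE_sub (hZ : Integrable Z P) (hW : Integrable W P) (hs : MeasurableSet s) :
    CE P (fun ω => Z ω - W ω) s = CE P Z s - CE P W s := by
  simp only [CE, Exp, sub_mul]
  rw [integral_sub (integrable_mul_indicator_one hZ hs) (integrable_mul_indicator_one hW hs),
    sub_div]

end ConditionalMean

theorem sum_mul_sub_eq_of_normal_equations {ι : Type*} {s : Finset ι} {p₀ p₁ m₀ m₁ θ : ι → ℝ}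
    {Δ : ℝ} (hp : ∀ a ∈ s, p₀ a + p₁ a ≠ 0)
    (h_stratum : ∀ a ∈ s, (m₀ a - θ a) * p₀ a + (m₁ a - Δ - θ a) * p₁ a = 0)
    (h_treat : ∑ a ∈ s, (m₁ a - Δ - θ a) * p₁ a = 0) :
    Δ * ∑ a ∈ s, p₀ a * p₁ a / (p₀ a + p₁ a)
      = ∑ a ∈ s, p₀ a * p₁ a / (p₀ a + p₁ a) * (m₁ a - m₀ a) := by
  have h_cell : ∀ a ∈ s, (m₁ a - Δ - θ a) * p₁ a
      = p₀ a * p₁ a / (p₀ a + p₁ a) * (m₁ a - m₀ a) - Δ * (p₀ a * p₁ a / (p₀ a + p₁ a)) := by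
    intro a ha
    field_simp [hp a ha]
    linear_combination p₁ a * h_stratum a ha
  rw [Finset.sum_congr rfl h_cell, Finset.sum_sub_distrib, ← Finset.mul_sum] at h_treat
  linarith

section Strata

variable {Ω : Type} {K : ℕ} {D : Ω → ℕ} {A : Ω → Fin K → ℕ} {𝒜 : Finset (Fin K → ℕ)}
  {Ypot : ℕ → (Fin K → ℕ) → Ω → ℝ}

theorem evA_eq_union (hDbin : ∀ ω, D ω = 0 ∨ D ω = 1) (a : Fin K → ℕ) :
    evA A a = evDA D A 0 a ∪ evDA D A 1 a := by
  ext ω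
  rcases hDbin ω with h | h <;> simp [evA, evDA, h]

theorem residSFE_eq (hDbin : ∀ ω, D ω = 0 ∨ D ω = 1) (hAsupp : ∀ ω, A ω ∈ 𝒜) (Δ : ℝ)
    (θ : (Fin K → ℕ) → ℝ) (ω : Ω) :
    residSFE D A 𝒜 Ypot Δ θ ω = Ypot (D ω) (A ω) ω - Δ * D ω - θ (A ω) := by
  rcases hDbin ω with h | h <;> simp [residSFE, Yobs, h, hAsupp ω]

theorem residSFE_mul_D (hDbin : ∀ ω, D ω = 0 ∨ D ω = 1) (hAsupp : ∀ ω, A ω ∈ 𝒜) (Δ : ℝ)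
    (θ : (Fin K → ℕ) → ℝ) (ω : Ω) :
    residSFE D A 𝒜 Ypot Δ θ ω * D ω
      = ∑ a ∈ 𝒜, (Ypot 1 a ω - (Δ + θ a)) * (evDA D A 1 a).indicator (fun _ => 1) ω := by
  rw [residSFE_eq hDbin hAsupp]
  rcases hDbin ω with h | h <;> simp [evDA, Set.indicator_apply, h, hAsupp ω]
  ring

theorem residSFE_mul_indicator_A (hDbin : ∀ ω, D ω = 0 ∨ D ω = 1) (hAsupp : ∀ ω, A ω ∈ 𝒜)
    (Δ : ℝ) (θ : (Fin K → ℕ) → ℝ) (a : Fin K → ℕ) (ω : Ω) :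
    residSFE D A 𝒜 Ypot Δ θ ω * (if A ω = a then 1 else 0)
      = (Ypot 0 a ω - θ a) * (evDA D A 0 a).indicator (fun _ => 1) ω
        + (Ypot 1 a ω - (Δ + θ a)) * (evDA D A 1 a).indicator (fun _ => 1) ω := by
  rw [residSFE_eq hDbin hAsupp]
  by_cases hA : A ω = a
  · rcases hDbin ω with h | h <;> simp [evDA, h, hA]
    ring
  · simp [evDA, hA]

variable [MeasurableSpace Ω] {P : Measure Ω}

theorem measurableSet_evDA (hD : Measurable D) (hA : Measurable A) (d : ℕ) (a : Fin K → ℕ) :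
    MeasurableSet (evDA D A d a) :=
  (hD (measurableSet_singleton d)).inter (hA (measurableSet_singleton a))

theorem Pr_evA_eq_add [IsFiniteMeasure P] (hD : Measurable D) (hA : Measurable A)
    (hDbin : ∀ ω, D ω = 0 ∨ D ω = 1) (a : Fin K → ℕ) :
    Pr P (evA A a) = Pr P (evDA D A 0 a) + Pr P (evDA D A 1 a) := by
  have hdisj : Disjoint (evDA D A 0 a) (evDA D A 1 a) :=
    Set.disjoint_left.2 fun ω h₀ h₁ => by simp_all [evDA]
  show P.real _ = P.real _ + P.real _
  rw [evA_eq_union hDbin]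
  exact measureReal_union hdisj (measurableSet_evDA hD hA 1 a)

theorem normal_equation_D [IsFiniteMeasure P] (hD : Measurable D) (hA : Measurable A)
    (hDbin : ∀ ω, D ω = 0 ∨ D ω = 1) (hAsupp : ∀ ω, A ω ∈ 𝒜)
    (hY₁ : ∀ a ∈ 𝒜, Integrable (Ypot 1 a) P) (hp₁ : ∀ a ∈ 𝒜, Pr P (evDA D A 1 a) ≠ 0)
    {Δ : ℝ} {θ : (Fin K → ℕ) → ℝ}
    (hO : Exp P (fun ω => residSFE D A 𝒜 Ypot Δ θ ω * (D ω : ℝ)) = 0) :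
    ∑ a ∈ 𝒜, (CE P (Ypot 1 a) (evDA D A 1 a) - Δ - θ a) * Pr P (evDA D A 1 a) = 0 := by
  rw [← hO, Exp, funext (residSFE_mul_D hDbin hAsupp Δ θ), integral_finsetSum]
  · refine Finset.sum_congr rfl fun a ha => ?_
    rw [← Exp, exp_sub_const_mul_indicator_one (hY₁ a ha) (measurableSet_evDA hD hA 1 a)
      (hp₁ a ha), sub_sub]
  · intro a ha
    exact integrable_sub_const_mul_indicator_one (hY₁ a ha) (measurableSet_evDA hD hA 1 a) _

theorem normal_equation_stratum [IsFiniteMeasure P] (hD : Measurable D) (hA : Measurable A)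
    (hDbin : ∀ ω, D ω = 0 ∨ D ω = 1) (hAsupp : ∀ ω, A ω ∈ 𝒜) {a : Fin K → ℕ}
    (hY₀ : Integrable (Ypot 0 a) P) (hY₁ : Integrable (Ypot 1 a) P)
    (hp₀ : Pr P (evDA D A 0 a) ≠ 0) (hp₁ : Pr P (evDA D A 1 a) ≠ 0)
    {Δ : ℝ} {θ : (Fin K → ℕ) → ℝ}
    (hO : Exp P (fun ω => residSFE D A 𝒜 Ypot Δ θ ω * (if A ω = a then (1:ℝ) else 0)) = 0) :
    (CE P (Ypot 0 a) (evDA D A 0 a) - θ a) * Pr P (evDA D A 0 a)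
      + (CE P (Ypot 1 a) (evDA D A 1 a) - Δ - θ a) * Pr P (evDA D A 1 a) = 0 := by
  have hs₀ := measurableSet_evDA hD hA 0 a
  have hs₁ := measurableSet_evDA hD hA 1 a
  rw [← hO, Exp, funext (residSFE_mul_indicator_A hDbin hAsupp Δ θ a),
    integral_add (integrable_sub_const_mul_indicator_one hY₀ hs₀ _)
      (integrable_sub_const_mul_indicator_one hY₁ hs₁ _),
    ← Exp, ← Exp, exp_sub_const_mul_indicator_one hY₀ hs₀ hp₀,
    exp_sub_const_mul_indicator_one hY₁ hs₁ hp₁, sub_sub]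

end Strata

section Weights

variable {Ω : Type} [MeasurableSpace Ω] {K : ℕ} {P : Measure Ω} {D : Ω → ℕ}
  {A : Ω → Fin K → ℕ}

/-- `P(A = a) · Var(D | A = a)`, the SFE weight before normalisation. -/
def stratumWeight (P : Measure Ω) (D : Ω → ℕ) (A : Ω → Fin K → ℕ) (a : Fin K → ℕ) : ℝ :=
  Pr P (evDA D A 0 a) * Pr P (evDA D A 1 a) / (Pr P (evDA D A 0 a) + Pr P (evDA D A 1 a))

theorem wsfe_eq [IsFiniteMeasure P] (hD : Measurable D) (hA : Measurable A)
    (hDbin : ∀ ω, D ω = 0 ∨ D ω = 1) (𝒜 : Finset (Fin K → ℕ)) (a : Fin K → ℕ) :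
    wsfe P D A 𝒜 a = stratumWeight P D A a / ∑ a' ∈ 𝒜, stratumWeight P D A a' := by
  have h : ∀ a, condDgivenA P D A 1 a * condDgivenA P D A 0 a * Pr P (evA A a)
      = stratumWeight P D A a := by
    intro a
    rw [condDgivenA, condDgivenA, stratumWeight, Pr_evA_eq_add hD hA hDbin]
    rcases eq_or_ne (Pr P (evDA D A 0 a) + Pr P (evDA D A 1 a)) 0 with hq | hq
    · simp [hq]
    · field_simp
  simp only [wsfe, h]

theorem wsfe_nonneg (P : Measure Ω) (D : Ω → ℕ) (A : Ω → Fin K → ℕ) (𝒜 : Finset (Fin K → ℕ))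
    (a : Fin K → ℕ) : 0 ≤ wsfe P D A 𝒜 a := by
  simp only [wsfe, condDgivenA, Pr]
  positivity

end Weights

theorem sfe_regression_decomposition_general
    (P : Measure Ω) [IsProbabilityMeasure P]
    (D : Ω → ℕ) (A : Ω → Fin K → ℕ) (𝒜 : Finset (Fin K → ℕ))
    (Ypot : ℕ → (Fin K → ℕ) → Ω → ℝ)
    (hD : Measurable D) (hA : Measurable A)
    (hDbin : ∀ ω, D ω = 0 ∨ D ω = 1)
    (hAsupp : ∀ ω, A ω ∈ 𝒜)
    (hInt : ∀ d ∈ ({0, 1} : Finset ℕ), ∀ a ∈ 𝒜, Integrable (Ypot d a) P)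
    (hpos : ∀ d ∈ ({0, 1} : Finset ℕ), ∀ a ∈ 𝒜, 0 < Pr P (evDA D A d a))
    (Δsfe : ℝ) (θ : (Fin K → ℕ) → ℝ)
    (hO1 : Exp P (fun ω => residSFE D A 𝒜 Ypot Δsfe θ ω * (D ω : ℝ)) = 0)
    (hO2 : ∀ a ∈ 𝒜,
      Exp P (fun ω => residSFE D A 𝒜 Ypot Δsfe θ ω * (if A ω = a then (1:ℝ) else 0)) = 0)
    :
    Δsfe
      = (∑ a ∈ 𝒜, wsfe P D A 𝒜 a *
            CE P (fun ω => Ypot 1 a ω - Ypot 0 a ω) (evDA D A 1 a))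
        + (∑ a ∈ 𝒜, wsfe P D A 𝒜 a *
            (CE P (Ypot 0 a) (evDA D A 1 a) - CE P (Ypot 0 a) (evDA D A 0 a)))
    ∧ (∑ a ∈ 𝒜, wsfe P D A 𝒜 a) = 1
    ∧ ∀ a ∈ 𝒜, 0 ≤ wsfe P D A 𝒜 a := by
  have hY₀ := hInt 0 (by simp)
  have hY₁ := hInt 1 (by simp)
  have hp₀ := hpos 0 (by simp)
  have hp₁ := hpos 1 (by simp)
  have hw := wsfe_eq (P := P) hD hA hDbin 𝒜
  have hS : 0 < ∑ a ∈ 𝒜, stratumWeight P D A a := by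
    obtain ⟨ω⟩ := nonempty_of_isProbabilityMeasure P
    refine Finset.sum_pos (fun a ha => ?_) ⟨A ω, hAsupp ω⟩
    have := hp₀ a ha
    have := hp₁ a ha
    unfold stratumWeight
    positivity
  have hΔ : Δsfe * ∑ a ∈ 𝒜, stratumWeight P D A a = ∑ a ∈ 𝒜, stratumWeight P D A a
      * (CE P (Ypot 1 a) (evDA D A 1 a) - CE P (Ypot 0 a) (evDA D A 0 a)) :=
    sum_mul_sub_eq_of_normal_equations (fun a ha => (add_pos (hp₀ a ha) (hp₁ a ha)).ne')
    (fun a ha => normal_equation_stratum hD hA hDbin hAsupp (hY₀ a ha) (hY₁ a ha)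
      (hp₀ a ha).ne' (hp₁ a ha).ne' (hO2 a ha))
    (normal_equation_D hD hA hDbin hAsupp hY₁ (fun a ha => (hp₁ a ha).ne') hO1)
  refine ⟨?_, ?_, fun a _ => wsfe_nonneg P D A 𝒜 a⟩
  · symm
    calc _ = ∑ a ∈ 𝒜, stratumWeight P D A a
          * (CE P (Ypot 1 a) (evDA D A 1 a) - CE P (Ypot 0 a) (evDA D A 0 a))
          / ∑ a' ∈ 𝒜, stratumWeight P D A a' := by
          rw [← Finset.sum_add_distrib]
          refine Finset.sum_congr rfl fun a ha => ?_
          rw [hw, CE_sub (hY₁ a ha) (hY₀ a ha) (measurableSet_evDA hD hA 1 a)]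
          ring
      _ = Δsfe := by
          rw [← Finset.sum_div, ← hΔ, mul_div_assoc, div_self hS.ne',
            mul_one]
  · rw [Finset.sum_congr rfl fun a _ => hw a, ← Finset.sum_div, div_self hS.ne']

/-- Strata-fixed-effects regression, general decomposition (Theorem B.6 / thm:sfe_pre). -/
theorem sfe_regression_decomposition
    (P : Measure Ω) [IsProbabilityMeasure P]
    (D : Ω → ℕ) (A : Ω → Fin K → ℕ) (𝒜 : Finset (Fin K → ℕ))
    (Ypot : ℕ → (Fin K → ℕ) → Ω → ℝ)
    (hD : Measurable D) (hA : Measurable A)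
    (hDbin : ∀ ω, D ω = 0 ∨ D ω = 1)
    (hAsupp : ∀ ω, A ω ∈ 𝒜) (h𝒜0 : (0 : Fin K → ℕ) ∈ 𝒜)
    (hInt : ∀ d ∈ ({0, 1} : Finset ℕ), ∀ a ∈ 𝒜, Integrable (Ypot d a) P)
    (hpos : ∀ d ∈ ({0, 1} : Finset ℕ), ∀ a ∈ 𝒜, 0 < Pr P (evDA D A d a))
    (Δsfe : ℝ) (θ : (Fin K → ℕ) → ℝ)
    (hO1 : Exp P (fun ω => residSFE D A 𝒜 Ypot Δsfe θ ω * (D ω : ℝ)) = 0)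
    (hO2 : ∀ a ∈ 𝒜,
      Exp P (fun ω => residSFE D A 𝒜 Ypot Δsfe θ ω * (if A ω = a then (1:ℝ) else 0)) = 0)
    :
    Δsfe
      = (∑ a ∈ 𝒜, wsfe P D A 𝒜 a *
            CE P (fun ω => Ypot 1 a ω - Ypot 0 a ω) (evDA D A 1 a))
        + (∑ a ∈ 𝒜, wsfe P D A 𝒜 a *
            (CE P (Ypot 0 a) (evDA D A 1 a) - CE P (Ypot 0 a) (evDA D A 0 a)))
    ∧ (∑ a ∈ 𝒜, wsfe P D A 𝒜 a) = 1
    ∧ ∀ a ∈ 𝒜, 0 ≤ wsfe P D A 𝒜 a :=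
  sfe_regression_decomposition_general P D A 𝒜 Ypot hD hA hDbin hAsupp hInt hpos Δsfe θ hO1 hO2
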